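/- arXiv:2205.12581 — 2 statements merged into one kernel-verified Lean document; each statement's English description precedes it below -/
import Mathlib

section
/- Any symmetric bilinear-form consistency statement: if u₁ and u₂ are two solutions of the augmented variational problem (Problem 2) with the same initial condition, then u₁ = u₂ on [0,T]. Concretely, in an abstract Hilbert space setting: let H be a real inner product space, 𝒫 an orthogonal projection on H with complement 𝒬 = Id - 𝒫, a a nonnegative symmetric bilinear form on 𝒫H, and ω > 0. If w : [0,T] → H is continuously differentiable, w(0) = 0, and for all v ∈ H and t ∈ (0,T], ⟨𝒫w'(t), 𝒫v⟩ + a(𝒫w(t), 𝒫v) + ω⟨𝒬w(t), 𝒬v⟩ = 0, then w(t) = 0 for all t ∈ [0,T]. -/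
open scoped RealInnerProductSpace

/-- Uniqueness/consistency for the augmented variational problem (Problem 2),
abstract Hilbert-space version: if `𝒫` is an orthogonal projection (linear,
self-adjoint, idempotent) with complement `𝒬 = Id - 𝒫`, `a` a nonnegative
symmetric bilinear form, `ω > 0`, and `w ∈ C¹([0,T], H)` satisfies `w(0) = 0` and
`⟨𝒫w'(t), 𝒫v⟩ + a(𝒫w(t), 𝒫v) + ω⟨𝒬w(t), 𝒬v⟩ = 0` for all `v` and `t ∈ (0,T]`,
then `w ≡ 0` on `[0,T]`. -/
theorem stmt_5 {H : Type*} [NormedAddCommGroup H] [InnerProductSpace ℝ H]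
    (P : H →ₗ[ℝ] H) (hPsa : ∀ x y : H, ⟪P x, y⟫ = ⟪x, P y⟫)
    (hPidem : ∀ x : H, P (P x) = P x)
    (Q : H →ₗ[ℝ] H) (hQ : Q = LinearMap.id - P)
    (a : H →ₗ[ℝ] H →ₗ[ℝ] ℝ) (hasymm : ∀ x y, a x y = a y x) (hapos : ∀ x, 0 ≤ a x x)
    (ω : ℝ) (hω : 0 < ω)
    (T : ℝ) (hT : 0 < T)
    (w w' : ℝ → H) (hderiv : ∀ t ∈ Set.Icc (0 : ℝ) T, HasDerivAt w (w' t) t)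
    (hcont : ContinuousOn w' (Set.Icc 0 T))
    (hw0 : w 0 = 0)
    (heq : ∀ t ∈ Set.Ioc (0 : ℝ) T, ∀ v : H,
      ⟪P (w' t), P v⟫ + a (P (w t)) (P v) + ω * ⟪Q (w t), Q v⟫ = 0) :
    ∀ t ∈ Set.Icc (0 : ℝ) T, w t = 0 := by
  -- P is bounded with norm ≤ 1
  have hPb : ∀ x : H, ‖P x‖ ≤ 1 * ‖x‖ := by
    intro x
    rw [one_mul]
    rcases eq_or_lt_of_le (norm_nonneg (P x)) with h | h
    · rw [← h]; exact norm_nonneg x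
    · have h1 : ‖P x‖ * ‖P x‖ ≤ ‖x‖ * ‖P x‖ := by
        calc ‖P x‖ * ‖P x‖ = ⟪P x, P x⟫ := (real_inner_self_eq_norm_mul_norm _).symm
        _ = ⟪x, P (P x)⟫ := hPsa _ _
        _ = ⟪x, P x⟫ := by rw [hPidem]
        _ ≤ ‖x‖ * ‖P x‖ := real_inner_le_norm _ _
      exact le_of_mul_le_mul_right h1 h
  set Pc : H →L[ℝ] H := P.mkContinuous 1 hPb with hPc
  have hPcapp : ∀ x, Pc x = P x := fun x => rfl
  -- continuity of w on Icc
  have hwc : ContinuousOn w (Set.Icc 0 T) := fun t ht =>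
    (hderiv t ht).continuousAt.continuousWithinAt
  -- energy function
  set f : ℝ → ℝ := fun t => ⟪P (w t), P (w t)⟫ with hf
  have hfderiv : ∀ t ∈ Set.Icc (0 : ℝ) T,
      HasDerivAt f (⟪P (w t), P (w' t)⟫ + ⟪P (w' t), P (w t)⟫) t := by
    intro t ht
    have hPw : HasDerivAt (fun s => Pc (w s)) (Pc (w' t)) t :=
      Pc.hasFDerivAt.comp_hasDerivAt t (hderiv t ht)
    exact HasDerivAt.inner ℝ hPw hPw
  -- derivative is ≤ 0 on Ioc
  have hnonpos : ∀ t ∈ Set.Ioo (0 : ℝ) T, deriv f t ≤ 0 := by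
    intro t ht
    have ht' : t ∈ Set.Icc (0 : ℝ) T := ⟨le_of_lt ht.1, le_of_lt ht.2⟩
    rw [(hfderiv t ht').deriv]
    have h1 := heq t ⟨ht.1, le_of_lt ht.2⟩ (w t)
    have h2 : ⟪P (w' t), P (w t)⟫ = -(a (P (w t)) (P (w t)) + ω * ⟪Q (w t), Q (w t)⟫) := by
      linarith
    have hcomm : ⟪P (w t), P (w' t)⟫ = ⟪P (w' t), P (w t)⟫ := real_inner_comm _ _
    have := hapos (P (w t))
    have h3 : (0:ℝ) ≤ ⟪Q (w t), Q (w t)⟫ := real_inner_self_nonneg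
    nlinarith
  have hfc : ContinuousOn f (Set.Icc 0 T) := by
    have : ContinuousOn (fun s => Pc (w s)) (Set.Icc 0 T) := Pc.continuous.comp_continuousOn hwc
    exact this.inner this
  have hanti : AntitoneOn f (Set.Icc 0 T) := by
    have := antitoneOn_of_deriv_nonpos (convex_Icc 0 T) hfc
      (fun x hx => by
        rw [interior_Icc] at hx
        exact (hfderiv x ⟨le_of_lt hx.1, le_of_lt hx.2⟩).differentiableAt.differentiableWithinAt)
      (fun x hx => by rw [interior_Icc] at hx; exact hnonpos x hx)
    exact this
  have hf0 : f 0 = 0 := by simp [hf, hw0]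
  have hPzero : ∀ t ∈ Set.Icc (0 : ℝ) T, P (w t) = 0 := by
    intro t ht
    have h1 : f t ≤ 0 := hf0 ▸ hanti (Set.left_mem_Icc.mpr (le_of_lt hT)) ht ht.1
    have h2 : (0:ℝ) ≤ f t := real_inner_self_nonneg
    have : f t = 0 := le_antisymm h1 h2
    exact inner_self_eq_zero.mp this
  intro t ht
  rcases eq_or_lt_of_le ht.1 with h | h
  · rw [← h, hw0]
  · -- t ∈ Ioc: take v = Q (w t)
    have hQQ : ∀ x, Q (Q x) = Q x := by
      intro x; simp [hQ, map_sub, hPidem]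
    have hPQ : ∀ x, P (Q x) = 0 := by
      intro x; simp [hQ, map_sub, hPidem]
    have h0 := heq t ⟨h, ht.2⟩ (Q (w t))
    rw [hPQ, hQQ, hPzero t ht] at h0
    simp only [inner_zero_right, map_zero, LinearMap.zero_apply, zero_add] at h0
    have hQz : Q (w t) = 0 := by
      have : ⟪Q (w t), Q (w t)⟫ = 0 := by
        rcases mul_eq_zero.mp h0 with h' | h'
        · exact absurd h' (ne_of_gt hω)
        · exact h'
      exact inner_self_eq_zero.mp this
    have : w t = P (w t) + Q (w t) := by simp [hQ]
    rw [this, hPzero t ht, hQz, add_zero]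
end

section
/- Energy dissipation for the abstract penalized problem: under the hypotheses of the previous setting, testing with v = w(t) gives (1/2) d/dt ‖𝒫w(t)‖² + a(𝒫w(t),𝒫w(t)) + ω‖𝒬w(t)‖² = 0, so the function t ↦ ‖𝒫w(t)‖² is nonincreasing; hence ‖𝒫w(t)‖ ≤ ‖𝒫w(0)‖ for all t. -/
open scoped RealInnerProductSpace

/-- Energy dissipation for the abstract penalized problem: under the hypotheses
of the augmented variational setting, `t ↦ ‖𝒫w(t)‖²` is nonincreasing; indeed,
testing with `v = w(t)` gives `(1/2) d/dt ‖𝒫w(t)‖² + a(𝒫w(t),𝒫w(t)) + ω‖𝒬w(t)‖² = 0`,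
hence `‖𝒫w(t)‖ ≤ ‖𝒫w(0)‖` for all `t ∈ [0,T]`. -/
theorem stmt_6 {H : Type*} [NormedAddCommGroup H] [InnerProductSpace ℝ H]
    (P : H →ₗ[ℝ] H) (hPsa : ∀ x y : H, ⟪P x, y⟫ = ⟪x, P y⟫)
    (hPidem : ∀ x : H, P (P x) = P x)
    (Q : H →ₗ[ℝ] H) (hQ : Q = LinearMap.id - P)
    (a : H →ₗ[ℝ] H →ₗ[ℝ] ℝ) (hasymm : ∀ x y, a x y = a y x) (hapos : ∀ x, 0 ≤ a x x)
    (ω : ℝ) (hω : 0 < ω)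
    (T : ℝ) (hT : 0 < T)
    (w w' : ℝ → H) (hderiv : ∀ t ∈ Set.Icc (0 : ℝ) T, HasDerivAt w (w' t) t)
    (hcont : ContinuousOn w' (Set.Icc 0 T))
    (heq : ∀ t ∈ Set.Ioc (0 : ℝ) T, ∀ v : H,
      ⟪P (w' t), P v⟫ + a (P (w t)) (P v) + ω * ⟪Q (w t), Q v⟫ = 0) :
    (∀ t ∈ Set.Ioc (0 : ℝ) T,
        HasDerivAt (fun s => ‖P (w s)‖ ^ 2)
          (-2 * a (P (w t)) (P (w t)) - 2 * ω * ‖Q (w t)‖ ^ 2) t) ∧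
      AntitoneOn (fun t => ‖P (w t)‖ ^ 2) (Set.Icc 0 T) ∧
      ∀ t ∈ Set.Icc (0 : ℝ) T, ‖P (w t)‖ ≤ ‖P (w 0)‖ := by
  have hPbound : ∀ x : H, ‖P x‖ ≤ 1 * ‖x‖ := by
    intro x
    rw [one_mul]
    have h1 : ⟪P x, P x⟫ = ⟪x, P x⟫ := by rw [hPsa, hPidem]
    have h2 : ‖P x‖ ^ 2 ≤ ‖x‖ * ‖P x‖ := by
      rw [← real_inner_self_eq_norm_sq, h1]
      exact real_inner_le_norm _ _
    nlinarith [norm_nonneg (P x), norm_nonneg x]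
  let Pc : H →L[ℝ] H := LinearMap.mkContinuous P 1 hPbound
  have hPc : ∀ x, Pc x = P x := fun _ => rfl
  have wcont : ContinuousOn w (Set.Icc 0 T) := fun t ht =>
    (hderiv t ht).continuousAt.continuousWithinAt
  have key : ∀ t ∈ Set.Ioc (0 : ℝ) T,
      HasDerivAt (fun s => ‖P (w s)‖ ^ 2)
        (-2 * a (P (w t)) (P (w t)) - 2 * ω * ‖Q (w t)‖ ^ 2) t := by
    intro t ht
    have htI : t ∈ Set.Icc (0 : ℝ) T := ⟨le_of_lt ht.1, ht.2⟩
    have hw := hderiv t htI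
    have hPw : HasDerivAt (fun s => P (w s)) (P (w' t)) t := by
      exact (Pc.hasFDerivAt.comp_hasDerivAt t hw)
    have hinner : HasDerivAt (fun s => ⟪P (w s), P (w s)⟫)
        (⟪P (w t), P (w' t)⟫ + ⟪P (w' t), P (w t)⟫) t := hPw.inner ℝ hPw
    have htest := heq t ht (w t)
    have hQQ : ⟪Q (w t), Q (w t)⟫ = ‖Q (w t)‖ ^ 2 := real_inner_self_eq_norm_sq _
    have hval : ⟪P (w t), P (w' t)⟫ + ⟪P (w' t), P (w t)⟫
        = -2 * a (P (w t)) (P (w t)) - 2 * ω * ‖Q (w t)‖ ^ 2 := by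
      rw [hQQ] at htest
      have hsymm : ⟪P (w' t), P (w t)⟫ = ⟪P (w t), P (w' t)⟫ := real_inner_comm _ _
      linarith
    rw [hval] at hinner
    have hfun : (fun s => ⟪P (w s), P (w s)⟫) = fun s => ‖P (w s)‖ ^ 2 := by
      funext s; exact real_inner_self_eq_norm_sq _
    rwa [hfun] at hinner
  have fcont : ContinuousOn (fun t => ‖P (w t)‖ ^ 2) (Set.Icc 0 T) := by
    have : Continuous fun x : H => ‖P x‖ ^ 2 := by
      have := Pc.continuous
      continuity
    exact this.comp_continuousOn wcont
  have hint : interior (Set.Icc (0 : ℝ) T) = Set.Ioo 0 T := interior_Icc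
  have fanti : AntitoneOn (fun t => ‖P (w t)‖ ^ 2) (Set.Icc 0 T) := by
    apply antitoneOn_of_deriv_nonpos (convex_Icc 0 T) fcont
    · intro x hx
      rw [hint] at hx
      exact (key x ⟨hx.1, le_of_lt hx.2⟩).differentiableAt.differentiableWithinAt
    · intro x hx
      rw [hint] at hx
      have hk := key x ⟨hx.1, le_of_lt hx.2⟩
      rw [hk.deriv]
      have := hapos (P (w x))
      have : (0:ℝ) ≤ ω * ‖Q (w x)‖ ^ 2 := by positivity
      nlinarith [hapos (P (w x))]
  refine ⟨key, fanti, ?_⟩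
  intro t ht
  have h0 : (0 : ℝ) ∈ Set.Icc (0 : ℝ) T := ⟨le_refl _, le_of_lt hT⟩
  have hle : ‖P (w t)‖ ^ 2 ≤ ‖P (w 0)‖ ^ 2 := by simpa using fanti h0 ht ht.1
  nlinarith [norm_nonneg (P (w t)), norm_nonneg (P (w 0))]
end
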